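/- Theorem 1 (monotonic nonincrease of the full update sweep): with all entries of z, t, v strictly positive, c entrywise nonnegative, p entrywise nonnegative, μ ≥ 0, and ∑_{i,j} t(i,k)·v(j,k) + μ > 0 for every k, perform one full sweep: (i) choose b'(k) ∈ argmin_{b} ∑_{a} D(p(b,a) | z(a,k)) for every k; (ii) set z'(a,k) = ( z(a,k)·∑_{i,j} c(a,i,j)·t(i,k)·v(j,k)/m(a,i,j) + μ·p(b'(k),a) ) / ( ∑_{i,j} t(i,k)·v(j,k) + μ ); (iii) set t'(i,k) = t(i,k)·( ∑_{a,j} c(a,i,j)·z'(a,k)·v(j,k)/m'(a,i,j) ) / ( ∑_{a,j} z'(a,k)·v(j,k) ) where m'(a,i,j) = ∑_{k} z'(a,k)·t(i,k)·v(j,k); (iv) set v'(j,k) = v(j,k)·( ∑_{a,i} c(a,i,j)·z'(a,k)·t'(i,k)/m''(a,i,j) ) / ( ∑_{a,i} z'(a,k)·t'(i,k) ) where m''(a,i,j) = ∑_{k} z'(a,k)·t'(i,k)·v(j,k). If all entries of z', t', v' remain strictly positive, then J(z',t',v',b') ≤ J(z,t,v,b) for every initial assignment b : Fin K → Fin B.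 -/

import Mathlib

open Finset Real

/-- Generalized Kullback–Leibler divergence `D(b|a) = b·log(b/a) + a − b`
(with the convention `0·log 0 = 0`, automatic since `Real.log 0 = 0`). -/
noncomputable def klD (q a : ℝ) : ℝ := q * Real.log (q / a) + a - q

/-- NTF model `m(a,i,j) = ∑ k, z(a,k)·t(i,k)·v(j,k)`. -/
noncomputable def ntfModel {A I J K : ℕ}
    (z : Fin A → Fin K → ℝ) (t : Fin I → Fin K → ℝ) (v : Fin J → Fin K → ℝ)
    (a : Fin A) (i : Fin I) (j : Fin J) : ℝ :=
  ∑ k, z a k * t i k * v j k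

/-- Regularized cost
`J(z,t,v,b) = ∑_{a,i,j} D(c(a,i,j)|m(a,i,j)) + μ·∑_k ∑_a D(p(b(k),a)|z(a,k))`. -/
noncomputable def ntfCost {A I J K B : ℕ}
    (c : Fin A → Fin I → Fin J → ℝ) (μ : ℝ) (p : Fin B → Fin A → ℝ)
    (z : Fin A → Fin K → ℝ) (t : Fin I → Fin K → ℝ) (v : Fin J → Fin K → ℝ)
    (b : Fin K → Fin B) : ℝ :=
  (∑ a, ∑ i, ∑ j, klD (c a i j) (ntfModel z t v a i j)) +
    μ * ∑ k, ∑ a, klD (p (b k) a) (z a k)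

/-!
Each factor update is a majorization–minimization step. By Jensen's inequality for `log`,
the divergence of a data entry from the mixture `∑ k, x k * w k` is majorized, with equality at
the current coefficients, by a function that separates over `k`; the regularizer separates
already. Each coordinate term has the form `A * y - B * log y`, minimized at `y = B / A`, which is
the multiplicative update. The model is symmetric in its three factors, so the basis and
activation steps are the allocation step with `μ = 0` after permuting the roles; the label step
lowers only the regularizer.
-/

open InformationTheory

lemma klD_eq_mul_klFun (q : ℝ) {a : ℝ} (ha : 0 < a) : klD q a = a * klFun (q / a) := by
  rw [klD, klFun]
  field_simp

lemma klD_nonneg {q a : ℝ} (hq : 0 ≤ q) (ha : 0 < a) : 0 ≤ klD q a := by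
  rw [klD_eq_mul_klFun q ha]
  exact mul_nonneg ha.le (klFun_nonneg (by positivity))

lemma klD_eq_klD_add_sub (q : ℝ) {x y : ℝ} (hx : 0 < x) (hy : 0 < y) :
    klD q y = klD q x + (y - x) - q * log (y / x) := by
  rcases eq_or_ne q 0 with rfl | hq
  · simp [klD]
  · simp only [klD]
    rw [log_div hq hy.ne', log_div hq hx.ne', log_div hy.ne' hx.ne']
    ring

/-- Jensen's inequality for `log` with the weights `x k * w k / ∑ k', x k' * w k'`. -/
lemma klD_sum_mul_le {ι : Type*} [Fintype ι] {c : ℝ} (hc : 0 ≤ c) {w x y : ι → ℝ}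
    (hw : ∀ k, 0 < w k) (hx : ∀ k, 0 < x k) (hy : ∀ k, 0 < y k) :
    klD c (∑ k, y k * w k) ≤ klD c (∑ k, x k * w k) + ∑ k, (y k - x k) * w k
      - c * ∑ k, x k * w k / (∑ k', x k' * w k') * log (y k / x k) := by
  rcases isEmpty_or_nonempty ι with hι | hι
  · simp
  set m := ∑ k, x k * w k
  have hm : 0 < m := Finset.sum_pos (fun k _ => mul_pos (hx k) (hw k)) univ_nonempty
  have hM : 0 < ∑ k, y k * w k :=
    Finset.sum_pos (fun k _ => mul_pos (hy k) (hw k)) univ_nonempty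
  have jensen : ∑ k, x k * w k / m * log (y k / x k) ≤ log ((∑ k, y k * w k) / m) := by
    have hmix : ∑ k, x k * w k / m * (y k / x k) = (∑ k, y k * w k) / m := by
      rw [Finset.sum_div]
      refine Finset.sum_congr rfl fun k _ => ?_
      field_simp [(hx k).ne']
    rw [← hmix]
    refine strictConcaveOn_log_Ioi.concaveOn.le_map_sum
      (fun k _ => div_nonneg (mul_pos (hx k) (hw k)).le hm.le) ?_
      (fun k _ => div_pos (hy k) (hx k))
    rw [← Finset.sum_div, div_self hm.ne']
  rw [klD_eq_klD_add_sub c hm hM, ← Finset.sum_sub_distrib]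
  simp only [sub_mul]
  nlinarith [mul_le_mul_of_nonneg_left jensen hc]

/-- For `A > 0` this is `-klD B (A * x) ≤ 0`; for `A = 0` both terms vanish since `B / 0 = 0` and
`log 0 = 0`. -/
lemma sub_mul_sub_mul_log_div_nonpos {A B x : ℝ} (hA : 0 ≤ A) (hB : 0 ≤ B) (hx : 0 < x) :
    (B / A - x) * A - B * log (B / A / x) ≤ 0 := by
  rcases hA.eq_or_lt with rfl | hA
  · simp
  have h := klD_nonneg hB (mul_pos hA hx)
  rw [klD, ← div_div] at h
  have hBA : B / A * A = B := div_mul_cancel₀ B hA.ne'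
  linarith [sub_mul (B / A) x A]

lemma sum_klD_update_le {ι E : Type*} [Fintype ι] [Fintype E] {c : E → ℝ} (hc : ∀ e, 0 ≤ c e)
    {w : E → ι → ℝ} (hw : ∀ e k, 0 < w e k) {μ : ℝ} (hμ : 0 ≤ μ) {q : ι → ℝ}
    (hq : ∀ k, 0 ≤ q k) {x x' : ι → ℝ} (hx : ∀ k, 0 < x k) (hx' : ∀ k, 0 < x' k)
    (hx'def : ∀ k, x' k =
      (x k * ∑ e, c e * w e k / (∑ k', x k' * w e k') + μ * q k) / ((∑ e, w e k) + μ)) :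
    (∑ e, klD (c e) (∑ k, x' k * w e k)) + μ * ∑ k, klD (q k) (x' k) ≤
      (∑ e, klD (c e) (∑ k, x k * w e k)) + μ * ∑ k, klD (q k) (x k) := by
  set m : E → ℝ := fun e => ∑ k', x k' * w e k'
  set S : ι → ℝ := fun k => ∑ e, c e * w e k / m e
  set L : ι → ℝ := fun k => log (x' k / x k)
  have fit : ∑ e, klD (c e) (∑ k, x' k * w e k) ≤ ∑ e, klD (c e) (m e)
      + ∑ k, (x' k - x k) * ∑ e, w e k - ∑ k, x k * S k * L k := by
    have h := Finset.sum_le_sum fun e (_ : e ∈ univ) =>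
      klD_sum_mul_le (hc e) (hw e) hx hx'
    have hW : ∑ e, ∑ k, (x' k - x k) * w e k = ∑ k, (x' k - x k) * ∑ e, w e k := by
      rw [Finset.sum_comm]
      simp only [Finset.mul_sum]
    have hS : ∑ e, c e * ∑ k, x k * w e k / m e * L k = ∑ k, x k * S k * L k := by
      simp only [S, Finset.mul_sum, Finset.sum_mul]
      rw [Finset.sum_comm]
      exact Finset.sum_congr rfl fun k _ => Finset.sum_congr rfl fun e _ => by ring
    simp only [Finset.sum_add_distrib, Finset.sum_sub_distrib, hW] at h
    linarith
  have attraction : ∑ k, klD (q k) (x' k)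
      = ∑ k, klD (q k) (x k) + ∑ k, (x' k - x k) - ∑ k, q k * L k := by
    rw [Finset.sum_congr rfl fun k _ => klD_eq_klD_add_sub (q k) (hx k) (hx' k)]
    simp only [Finset.sum_add_distrib, Finset.sum_sub_distrib, L]
  have step : ∀ k, (x' k - x k) * ((∑ e, w e k) + μ) - (x k * S k + μ * q k) * L k ≤ 0 := by
    intro k
    have hS : 0 ≤ S k := Finset.sum_nonneg fun e _ =>
      div_nonneg (mul_nonneg (hc e) (hw e k).le)
        (Finset.sum_nonneg fun k' _ => (mul_pos (hx k') (hw e k')).le)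
    have h := sub_mul_sub_mul_log_div_nonpos
      (add_nonneg (Finset.sum_nonneg fun e (_ : e ∈ univ) => (hw e k).le) hμ)
      (add_nonneg (mul_nonneg (hx k).le hS) (mul_nonneg hμ (hq k))) (hx k)
    rwa [← hx'def k] at h
  have total : ∑ k, (x' k - x k) * ∑ e, w e k - ∑ k, x k * S k * L k
      + μ * (∑ k, (x' k - x k) - ∑ k, q k * L k) ≤ 0 := by
    refine le_of_eq_of_le ?_ (Finset.sum_nonpos fun k (_ : k ∈ univ) => step k)
    simp only [mul_add, add_mul, Finset.sum_add_distrib, Finset.sum_sub_distrib, ← Finset.sum_mul,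
      mul_assoc, ← Finset.mul_sum]
    ring
  rw [attraction]
  linarith

section NTF

variable {A I J K B : ℕ}

lemma ntfModel_swap (z : Fin A → Fin K → ℝ) (t : Fin I → Fin K → ℝ) (v : Fin J → Fin K → ℝ)
    (a : Fin A) (i : Fin I) (j : Fin J) : ntfModel t z v i a j = ntfModel z t v a i j :=
  Finset.sum_congr rfl fun k _ => by ring

lemma ntfModel_rotate (z : Fin A → Fin K → ℝ) (t : Fin I → Fin K → ℝ) (v : Fin J → Fin K → ℝ)
    (a : Fin A) (i : Fin I) (j : Fin J) : ntfModel v z t j a i = ntfModel z t v a i j :=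
  Finset.sum_congr rfl fun k _ => by ring

lemma sum_klD_ntfModel_update_le {c : Fin A → Fin I → Fin J → ℝ} (hc : ∀ a i j, 0 ≤ c a i j)
    {z z' : Fin A → Fin K → ℝ} {t : Fin I → Fin K → ℝ} {v : Fin J → Fin K → ℝ}
    (hz : ∀ a k, 0 < z a k) (hz' : ∀ a k, 0 < z' a k) (ht : ∀ i k, 0 < t i k)
    (hv : ∀ j k, 0 < v j k) {μ : ℝ} (hμ : 0 ≤ μ) {q : Fin A → Fin K → ℝ}
    (hq : ∀ a k, 0 ≤ q a k)
    (hz'def : ∀ a k, z' a k =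
      (z a k * ∑ i, ∑ j, c a i j * t i k * v j k / ntfModel z t v a i j
        + μ * q a k) / ((∑ i, ∑ j, t i k * v j k) + μ)) :
    (∑ a, ∑ i, ∑ j, klD (c a i j) (ntfModel z' t v a i j)) + μ * ∑ a, ∑ k, klD (q a k) (z' a k)
      ≤ (∑ a, ∑ i, ∑ j, klD (c a i j) (ntfModel z t v a i j))
        + μ * ∑ a, ∑ k, klD (q a k) (z a k) := by
  have row : ∀ a, (∑ i, ∑ j, klD (c a i j) (ntfModel z' t v a i j))
      + μ * ∑ k, klD (q a k) (z' a k) ≤ (∑ i, ∑ j, klD (c a i j) (ntfModel z t v a i j))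
      + μ * ∑ k, klD (q a k) (z a k) := by
    intro a
    simp only [ntfModel, mul_assoc, ← Fintype.sum_prod_type']
    refine sum_klD_update_le (fun e : Fin I × Fin J => hc a e.1 e.2)
      (fun e k => mul_pos (ht e.1 k) (hv e.2 k)) hμ (hq a) (hz a) (hz' a) fun k => ?_
    rw [hz'def]
    simp only [ntfModel, mul_assoc, ← Fintype.sum_prod_type']
  simpa only [Finset.mul_sum, ← Finset.sum_add_distrib] using Finset.sum_le_sum fun a _ => row a

variable {c : Fin A → Fin I → Fin J → ℝ} {μ : ℝ} {p : Fin B → Fin A → ℝ}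
  {z : Fin A → Fin K → ℝ} {t : Fin I → Fin K → ℝ} {v : Fin J → Fin K → ℝ}

lemma ntfCost_label_update_le (hμ : 0 ≤ μ) {b b' : Fin K → Fin B}
    (hb' : ∀ k, ∑ a, klD (p (b' k) a) (z a k) ≤ ∑ a, klD (p (b k) a) (z a k)) :
    ntfCost c μ p z t v b' ≤ ntfCost c μ p z t v b :=
  add_le_add_right (mul_le_mul_of_nonneg_left (Finset.sum_le_sum fun k _ => hb' k) hμ) _

lemma ntfCost_allocation_update_le (hc : ∀ a i j, 0 ≤ c a i j) (hp : ∀ b a, 0 ≤ p b a)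
    (hμ : 0 ≤ μ) (hz : ∀ a k, 0 < z a k) (ht : ∀ i k, 0 < t i k) (hv : ∀ j k, 0 < v j k)
    {b : Fin K → Fin B} {z' : Fin A → Fin K → ℝ} (hz' : ∀ a k, 0 < z' a k)
    (hz'def : ∀ a k, z' a k =
      (z a k * ∑ i, ∑ j, c a i j * t i k * v j k / ntfModel z t v a i j
        + μ * p (b k) a) / ((∑ i, ∑ j, t i k * v j k) + μ)) :
    ntfCost c μ p z' t v b ≤ ntfCost c μ p z t v b := by
  have h := sum_klD_ntfModel_update_le hc hz hz' ht hv hμ (q := fun a k => p (b k) a)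
    (fun a k => hp (b k) a) hz'def
  simpa only [ntfCost, Finset.sum_comm (γ := Fin A)] using h

lemma ntfCost_basis_update_le (hc : ∀ a i j, 0 ≤ c a i j) (hz : ∀ a k, 0 < z a k)
    (ht : ∀ i k, 0 < t i k) (hv : ∀ j k, 0 < v j k) {b : Fin K → Fin B}
    {t' : Fin I → Fin K → ℝ} (ht' : ∀ i k, 0 < t' i k)
    (ht'def : ∀ i k, t' i k =
      t i k * (∑ a, ∑ j, c a i j * z a k * v j k / ntfModel z t v a i j) /
        (∑ a, ∑ j, z a k * v j k)) :
    ntfCost c μ p z t' v b ≤ ntfCost c μ p z t v b := by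
  have h := sum_klD_ntfModel_update_le (c := fun i a j => c a i j) (fun i a j => hc a i j)
    ht ht' hz hv le_rfl (q := 0) (fun _ _ => le_rfl) fun i k => by
      simpa [ntfModel_swap] using ht'def i k
  simp only [zero_mul, add_zero, ntfModel_swap] at h
  rw [Finset.sum_comm (γ := Fin I), Finset.sum_comm (γ := Fin I)] at h
  exact add_le_add_left h _

lemma ntfCost_activation_update_le (hc : ∀ a i j, 0 ≤ c a i j) (hz : ∀ a k, 0 < z a k)
    (ht : ∀ i k, 0 < t i k) (hv : ∀ j k, 0 < v j k) {b : Fin K → Fin B}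
    {v' : Fin J → Fin K → ℝ} (hv' : ∀ j k, 0 < v' j k)
    (hv'def : ∀ j k, v' j k =
      v j k * (∑ a, ∑ i, c a i j * z a k * t i k / ntfModel z t v a i j) /
        (∑ a, ∑ i, z a k * t i k)) :
    ntfCost c μ p z t v' b ≤ ntfCost c μ p z t v b := by
  have h := sum_klD_ntfModel_update_le (c := fun j a i => c a i j) (fun j a i => hc a i j)
    hv hv' hz ht le_rfl (q := 0) (fun _ _ => le_rfl) fun j k => by
      simpa [ntfModel_rotate] using hv'def j k
  simp only [zero_mul, add_zero, ntfModel_rotate, Finset.sum_comm (γ := Fin J)] at h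
  exact add_le_add_left h _

end NTF

theorem stmt5_general (A I J K B : ℕ)
    (z : Fin A → Fin K → ℝ) (t : Fin I → Fin K → ℝ) (v : Fin J → Fin K → ℝ)
    (hz : ∀ a k, 0 < z a k) (ht : ∀ i k, 0 < t i k) (hv : ∀ j k, 0 < v j k)
    (c : Fin A → Fin I → Fin J → ℝ) (hc : ∀ a i j, 0 ≤ c a i j)
    (p : Fin B → Fin A → ℝ) (hp : ∀ b a, 0 ≤ p b a)
    (μ : ℝ) (hμ : 0 ≤ μ)
    -- (i) label update: each b'(k) is a nearest attractor to z(·,k)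
    (b' : Fin K → Fin B)
    (hb' : ∀ k, ∀ b : Fin B,
      ∑ a, klD (p (b' k) a) (z a k) ≤ ∑ a, klD (p b a) (z a k))
    -- (ii) allocation update
    (z' : Fin A → Fin K → ℝ)
    (hz'def : ∀ a k, z' a k =
      (z a k * ∑ i, ∑ j, c a i j * t i k * v j k / ntfModel z t v a i j
        + μ * p (b' k) a) / ((∑ i, ∑ j, t i k * v j k) + μ))
    -- (iii) basis update, using m'(a,i,j) = ∑ k, z'(a,k)·t(i,k)·v(j,k)
    (t' : Fin I → Fin K → ℝ)
    (ht'def : ∀ i k, t' i k =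
      t i k * (∑ a, ∑ j, c a i j * z' a k * v j k / ntfModel z' t v a i j) /
        (∑ a, ∑ j, z' a k * v j k))
    -- (iv) activation update, using m''(a,i,j) = ∑ k, z'(a,k)·t'(i,k)·v(j,k)
    (v' : Fin J → Fin K → ℝ)
    (hv'def : ∀ j k, v' j k =
      v j k * (∑ a, ∑ i, c a i j * z' a k * t' i k / ntfModel z' t' v a i j) /
        (∑ a, ∑ i, z' a k * t' i k))
    (hz' : ∀ a k, 0 < z' a k) (ht' : ∀ i k, 0 < t' i k) (hv' : ∀ j k, 0 < v' j k) :
    ∀ b : Fin K → Fin B,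
      ntfCost c μ p z' t' v' b' ≤ ntfCost c μ p z t v b := by
  intro b
  calc ntfCost c μ p z' t' v' b'
      ≤ ntfCost c μ p z' t' v b' := ntfCost_activation_update_le hc hz' ht' hv hv' hv'def
    _ ≤ ntfCost c μ p z' t v b' := ntfCost_basis_update_le hc hz' ht hv ht' ht'def
    _ ≤ ntfCost c μ p z t v b' := ntfCost_allocation_update_le hc hp hμ hz ht hv hz' hz'def
    _ ≤ ntfCost c μ p z t v b := ntfCost_label_update_le hμ fun k => hb' k (b k)

/-- Theorem 1: one full sweep of the label, allocation, basis, and activation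
updates does not increase the regularized cost. -/
theorem stmt5 (A I J K B : ℕ)
    (z : Fin A → Fin K → ℝ) (t : Fin I → Fin K → ℝ) (v : Fin J → Fin K → ℝ)
    (hz : ∀ a k, 0 < z a k) (ht : ∀ i k, 0 < t i k) (hv : ∀ j k, 0 < v j k)
    (c : Fin A → Fin I → Fin J → ℝ) (hc : ∀ a i j, 0 ≤ c a i j)
    (p : Fin B → Fin A → ℝ) (hp : ∀ b a, 0 ≤ p b a)
    (μ : ℝ) (hμ : 0 ≤ μ)
    (hden : ∀ k : Fin K, 0 < (∑ i, ∑ j, t i k * v j k) + μ)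
    -- (i) label update: each b'(k) is a nearest attractor to z(·,k)
    (b' : Fin K → Fin B)
    (hb' : ∀ k, ∀ b : Fin B,
      ∑ a, klD (p (b' k) a) (z a k) ≤ ∑ a, klD (p b a) (z a k))
    -- (ii) allocation update
    (z' : Fin A → Fin K → ℝ)
    (hz'def : ∀ a k, z' a k =
      (z a k * ∑ i, ∑ j, c a i j * t i k * v j k / ntfModel z t v a i j
        + μ * p (b' k) a) / ((∑ i, ∑ j, t i k * v j k) + μ))
    -- (iii) basis update, using m'(a,i,j) = ∑ k, z'(a,k)·t(i,k)·v(j,k)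
    (t' : Fin I → Fin K → ℝ)
    (ht'def : ∀ i k, t' i k =
      t i k * (∑ a, ∑ j, c a i j * z' a k * v j k / ntfModel z' t v a i j) /
        (∑ a, ∑ j, z' a k * v j k))
    -- (iv) activation update, using m''(a,i,j) = ∑ k, z'(a,k)·t'(i,k)·v(j,k)
    (v' : Fin J → Fin K → ℝ)
    (hv'def : ∀ j k, v' j k =
      v j k * (∑ a, ∑ i, c a i j * z' a k * t' i k / ntfModel z' t' v a i j) /
        (∑ a, ∑ i, z' a k * t' i k))
    (hz' : ∀ a k, 0 < z' a k) (ht' : ∀ i k, 0 < t' i k) (hv' : ∀ j k, 0 < v' j k) :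
    ∀ b : Fin K → Fin B,
      ntfCost c μ p z' t' v' b' ≤ ntfCost c μ p z t v b :=
  stmt5_general A I J K B z t v hz ht hv c hc p hp μ hμ b' hb' z' hz'def t' ht'def v' hv'def hz' ht'
    hv'
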